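/- arXiv:1701.07482 — 2 statements merged into one kernel-verified Lean document; each statement's English description precedes it below -/
import Mathlib

section
/- Consider the switched quantized control system with parameter α satisfying 1 < α < 3/2 and disturbance rounding error Δ_d with |Δ_d| ≤ 1/2. If at some time k the state satisfies condition (9), i.e., −1/2 < e(k) < 1/2, 1 ≤ α − ū(k)·sign(Δ_d) < 3/2, and −1/2 < ū(k) < 1/2, then for every integer h > 0 the quantized state satisfies (ρ(e(k+h)), ρ(ū(k+h))) ∈ {(0, 0), (sign(Δ_d), −sign(Δ_d))}. -/
/-- Sign function: 1 for positive, 0 for zero, -1 for negative. -/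
noncomputable def rsign (z : ℝ) : ℤ :=
  if 0 < z then 1 else if z = 0 then 0 else -1

/-- Rounding operator: rounds to the nearest integer, ties away from zero. -/
noncomputable def rho (z : ℝ) : ℤ :=
  if Int.fract |z| < 1/2 then rsign z * ⌊|z|⌋ else rsign z * (⌊|z|⌋ + 1)

/-- The switched quantized control system with parameter `α` and disturbance
rounding error `Δd`, with state trajectory `(e, u)`. -/
def Traj (α Δd : ℝ) (e u : ℕ → ℝ) : Prop :=
  ∀ k : ℕ,
    e (k+1) = e k + (rho (u k) : ℝ) + Δd ∧
    u (k+1) = if rho (e (k+1)) = 0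
      then ((rho (u k) : ℝ) + (rho (e k) : ℝ))
      else (u k + (rho (e k) : ℝ) - α * (rho (e (k+1)) : ℝ))

/-- Condition (9) at time `k`. -/
def Cond9 (α Δd : ℝ) (e u : ℕ → ℝ) (k : ℕ) : Prop :=
  (-(1/2) < e k ∧ e k < 1/2) ∧
  (1 ≤ α - u k * (rsign Δd : ℝ) ∧ α - u k * (rsign Δd : ℝ) < 3/2) ∧
  (-(1/2) < u k ∧ u k < 1/2)

/-!
Along a trajectory started in condition (9) the state alternates between two regimes. In the
resting regime (condition (9)) both `e` and `u` quantize to `0`, so `e` drifts by `Δd` alone.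
Either it stays below the threshold `1/2` in absolute value, and then `u` is reset to `0`, which
again satisfies (9); or it crosses the threshold, necessarily in the direction `s = sign Δd`, and
the switched branch moves `u` by `-α s`, so that `(ρ e, ρ u) = (s, -s)`, the band
`1 ≤ α - u s < 3/2` being exactly what keeps `u` within rounding distance of `-s`. From there the
next step subtracts `s` from `e`, bringing it back below the threshold, and resets `u` to `0`.
-/

lemma rsign_of_pos {z : ℝ} (h : 0 < z) : rsign z = 1 := if_pos h

lemma rsign_of_neg {z : ℝ} (h : z < 0) : rsign z = -1 := by
  rw [rsign, if_neg h.not_gt, if_neg h.ne]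

lemma rho_eq_rsign_mul_round (z : ℝ) : rho z = rsign z * round |z| := by
  have hz := Int.floor_add_fract |z|
  have h0 := Int.fract_nonneg |z|
  have h1 := Int.fract_lt_one |z|
  rw [rho, round_eq]
  split_ifs <;> congr 1 <;> rw [eq_comm, Int.floor_eq_iff]
  · constructor <;> linarith
  · push_cast
    constructor <;> linarith

lemma rho_eq_zero_of_abs_lt {z : ℝ} (h : |z| < 1 / 2) : rho z = 0 := by
  rw [rho_eq_rsign_mul_round, round_eq_zero_iff.2 ⟨by linarith [abs_nonneg z], h⟩, mul_zero]

lemma rho_eq_one {z : ℝ} (h₁ : 1 / 2 ≤ z) (h₂ : z < 3 / 2) : rho z = 1 := by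
  have hz : 0 < z := by linarith
  have hround : round z = 1 := round_eq_iff.2 ⟨by norm_num; linarith, by norm_num; linarith⟩
  simp [rho_eq_rsign_mul_round, rsign_of_pos hz, abs_of_pos hz, hround]

lemma rho_eq_neg_one {z : ℝ} (h₁ : -(3 / 2) < z) (h₂ : z ≤ -(1 / 2)) : rho z = -1 := by
  have hz : z < 0 := by linarith
  have hround : round (-z) = 1 := round_eq_iff.2 ⟨by norm_num; linarith, by norm_num; linarith⟩
  simp [rho_eq_rsign_mul_round, rsign_of_neg hz, abs_of_neg hz, hround]

/-- The state reached from condition (9) when `e` crosses a rounding threshold. -/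
def Kicked (Δd : ℝ) (e u : ℕ → ℝ) (n : ℕ) : Prop :=
  (0 < Δd ∧ 1 / 2 ≤ e n ∧ e n < 1 ∧ -(3 / 2) < u n ∧ u n ≤ -1) ∨
  (Δd < 0 ∧ -1 < e n ∧ e n ≤ -(1 / 2) ∧ 1 ≤ u n ∧ u n < 3 / 2)

section

variable {α Δd : ℝ} {e u : ℕ → ℝ} {n : ℕ}

lemma Cond9.rho_eq (h : Cond9 α Δd e u n) : rho (e n) = 0 ∧ rho (u n) = 0 := by
  obtain ⟨⟨he₁, he₂⟩, -, hu₁, hu₂⟩ := h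
  exact ⟨rho_eq_zero_of_abs_lt (abs_lt.2 ⟨he₁, he₂⟩), rho_eq_zero_of_abs_lt (abs_lt.2 ⟨hu₁, hu₂⟩)⟩

lemma Kicked.rho_eq (h : Kicked Δd e u n) : rho (e n) = rsign Δd ∧ rho (u n) = -rsign Δd := by
  rcases h with ⟨hΔ, he₁, he₂, hu₁, hu₂⟩ | ⟨hΔ, he₁, he₂, hu₁, hu₂⟩
  · rw [rsign_of_pos hΔ, rho_eq_one he₁ (by linarith), rho_eq_neg_one hu₁ (by linarith)]
    exact ⟨rfl, rfl⟩
  · rw [rsign_of_neg hΔ, rho_eq_neg_one (by linarith) he₂, rho_eq_one (by linarith) hu₂]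
    exact ⟨rfl, rfl⟩

/-- The unswitched branch then resets `u` to `0`, which satisfies condition (9) for any `α`
in `(1, 3/2)`. -/
lemma Traj.cond9_succ (hα : 1 < α ∧ α < 3 / 2) (htraj : Traj α Δd e u)
    (he : |e (n + 1)| < 1 / 2) (hcancel : rho (u n) + rho (e n) = 0) :
    Cond9 α Δd e u (n + 1) := by
  have hu : u (n + 1) = 0 := by
    rw [(htraj n).2, if_pos (rho_eq_zero_of_abs_lt he)]
    exact_mod_cast hcancel
  obtain ⟨he₁, he₂⟩ := abs_lt.1 he
  obtain ⟨hα₁, hα₂⟩ := hα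
  exact ⟨⟨he₁, he₂⟩, by simp [hu, hα₁.le, hα₂]⟩

lemma Cond9.step (hα : 1 < α ∧ α < 3 / 2) (hΔ : |Δd| ≤ 1 / 2) (htraj : Traj α Δd e u)
    (h : Cond9 α Δd e u n) : Cond9 α Δd e u (n + 1) ∨ Kicked Δd e u (n + 1) := by
  obtain ⟨hre, hru⟩ := h.rho_eq
  obtain ⟨⟨he₁, he₂⟩, ⟨hs₁, hs₂⟩, -⟩ := h
  obtain ⟨hΔ₁, hΔ₂⟩ := abs_le.1 hΔ
  have he : e (n + 1) = e n + Δd := by simp [(htraj n).1, hru]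
  have hu : rho (e (n + 1)) ≠ 0 → u (n + 1) = u n - α * rho (e (n + 1)) := fun h ↦ by
    simp [(htraj n).2, h, hre]
  rcases lt_or_ge (e (n + 1)) (1 / 2) with hup | hup
  · rcases lt_or_ge (-(1 / 2)) (e (n + 1)) with hdown | hdown
    · exact .inl (htraj.cond9_succ hα (abs_lt.2 ⟨hdown, hup⟩) (by simp [hre, hru]))
    · have hΔneg : Δd < 0 := by linarith
      have hρ : rho (e (n + 1)) = -1 := rho_eq_neg_one (by linarith) hdown
      have hu' : u (n + 1) = u n + α := by simpa [hρ] using hu (by simp [hρ])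
      rw [rsign_of_neg hΔneg, Int.cast_neg, Int.cast_one, mul_neg_one] at hs₁ hs₂
      exact .inr (.inr ⟨hΔneg, by linarith, hdown, by linarith, by linarith⟩)
  · have hΔpos : 0 < Δd := by linarith
    have hρ : rho (e (n + 1)) = 1 := rho_eq_one hup (by linarith)
    have hu' : u (n + 1) = u n - α := by simpa [hρ] using hu (by simp [hρ])
    rw [rsign_of_pos hΔpos, Int.cast_one, mul_one] at hs₁ hs₂
    exact .inr (.inl ⟨hΔpos, hup, by linarith, by linarith, by linarith⟩)

lemma Kicked.step (hα : 1 < α ∧ α < 3 / 2) (hΔ : |Δd| ≤ 1 / 2) (htraj : Traj α Δd e u)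
    (h : Kicked Δd e u n) : Cond9 α Δd e u (n + 1) := by
  obtain ⟨hre, hru⟩ := h.rho_eq
  refine htraj.cond9_succ hα ?_ (by rw [hre, hru, neg_add_cancel])
  rw [(htraj n).1, hru]
  obtain ⟨hΔ₁, hΔ₂⟩ := abs_le.1 hΔ
  rcases h with ⟨hΔ, he₁, he₂, -⟩ | ⟨hΔ, he₁, he₂, -⟩
  · rw [rsign_of_pos hΔ]
    push_cast
    exact abs_lt.2 ⟨by linarith, by linarith⟩
  · rw [rsign_of_neg hΔ]
    push_cast
    exact abs_lt.2 ⟨by linarith, by linarith⟩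

end

theorem stmt_0 (α Δd : ℝ) (hα : 1 < α ∧ α < 3/2) (hΔ : |Δd| ≤ 1/2)
    (e u : ℕ → ℝ) (htraj : Traj α Δd e u) (k : ℕ) (h9 : Cond9 α Δd e u k) :
    ∀ h : ℕ, 0 < h →
      (rho (e (k+h)), rho (u (k+h))) = ((0 : ℤ), (0 : ℤ)) ∨
      (rho (e (k+h)), rho (u (k+h))) = (rsign Δd, -rsign Δd) := by
  have invariant : ∀ h, Cond9 α Δd e u (k + h) ∨ Kicked Δd e u (k + h) := by
    intro h
    induction h with
    | zero => exact .inl h9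
    | succ h ih => exact ih.elim (Cond9.step hα hΔ htraj) (.inl ∘ Kicked.step hα hΔ htraj)
  intro h _
  rcases invariant h with hc | hk
  · obtain ⟨he, hu⟩ := hc.rho_eq
    simp [he, hu]
  · obtain ⟨he, hu⟩ := hk.rho_eq
    simp [he, hu]
end

section
/- (No periodic solution for irrational disturbance rounding error.) Consider the switched quantized control system with parameter α satisfying 1 < α < 3/2 and disturbance rounding error Δ_d irrational with |Δ_d| < 1/2, and suppose condition (9) holds at some time k. Then the trajectory is never eventually periodic: there exist no integers p ≥ 1 and k̄ ≥ k such that e(j+p) = e(j) and ū(j+p) = ū(j) for all j ≥ k̄. -/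
open Finset

theorem Traj.error_add_eq {α Δd : ℝ} {e u : ℕ → ℝ} (htraj : Traj α Δd e u) (m n : ℕ) :
    e (m + n) = e m + ((∑ i ∈ range n, rho (u (m + i)) : ℤ) : ℝ) + n * Δd := by
  induction n with
  | zero => simp
  | succ n ih =>
    rw [← add_assoc, (htraj (m + n)).1, ih]
    push_cast [sum_range_succ]
    ring

theorem stmt_5_general (α Δd : ℝ)
    (hirr : Irrational Δd)
    (e u : ℕ → ℝ) (htraj : Traj α Δd e u) (k : ℕ) :
    ¬ ∃ (p : ℕ) (kb : ℕ), 1 ≤ p ∧ k ≤ kb ∧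
        ∀ j : ℕ, kb ≤ j → e (j+p) = e j ∧ u (j+p) = u j := by
  rintro ⟨p, kb, hp, -, hper⟩
  have hshift := htraj.error_add_eq kb p
  rw [(hper kb le_rfl).1] at hshift
  -- over one period `e` changes by an integer plus `p * Δd`, which is irrational
  refine ((hirr.natCast_mul (by omega : p ≠ 0)).intCast_add
    (∑ i ∈ range p, rho (u (kb + i)))).ne_zero ?_
  linarith

theorem stmt_5 (α Δd : ℝ) (hα : 1 < α ∧ α < 3/2)
    (hirr : Irrational Δd) (hΔ : |Δd| < 1/2)
    (e u : ℕ → ℝ) (htraj : Traj α Δd e u) (k : ℕ) (h9 : Cond9 α Δd e u k) :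
    ¬ ∃ (p : ℕ) (kb : ℕ), 1 ≤ p ∧ k ≤ kb ∧
        ∀ j : ℕ, kb ≤ j → e (j+p) = e j ∧ u (j+p) = u j :=
  stmt_5_general α Δd hirr e u htraj k
end
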